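/- Let Γ be a weighted potential game with multilinear potential U on the mixed-strategy space X ⊂ ℝ^κ, and let x* be a Nash equilibrium at which exactly one player's strategy has support of size at least 2. Then x* is second-order degenerate: the matrix H̃(x*) (the Hessian of U restricted to the coordinates of the mixing players' supports) is the zero matrix, hence singular. Consequently, in a regular potential game every mixed-strategy Nash equilibrium has at least two players using properly mixed strategies. -/

import Mathlib

open MeasureTheory Set Function Filter Topology
open scoped ENNReal

namespace BRGame

variable {ι : Type} [Fintype ι] [DecidableEq ι]
variable {A : ι → Type} [∀ i, Fintype (A i)] [∀ i, DecidableEq (A i)]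

/-- Joint pure-strategy profiles: player `i`'s action set is `Option (A i)`
(`none` plays the role of the distinguished action dropped in `X`-coordinates,
so `K i = Fintype.card (A i) + 1` and `κ = ∑ i, Fintype.card (A i)`). -/
abbrev PureProf (A : ι → Type) := ∀ i, Option (A i)

/-- Mixed strategies in the `X`-coordinates of the paper:  `Strat A ≃ ℝ^κ`. -/
abbrev Strat (A : ι → Type) := ∀ i, A i → ℝ

/-- The probability that `x` assigns to action `o` of player `i`. -/
def coord (x : Strat A) (i : ι) : Option (A i) → ℝ
  | none => 1 - ∑ a, x i a
  | some a => x i a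

/-- Player `i`'s strategy set `X_i`. -/
def Xi (A : ι → Type) [∀ i, Fintype (A i)] (i : ι) : Set (A i → ℝ) :=
  {xi | (∀ a, 0 ≤ xi a) ∧ ∑ a, xi a ≤ 1}

/-- The joint mixed-strategy space `X ⊆ ℝ^κ`. -/
def mixedX : Set (Strat A) := {x | ∀ i, x i ∈ Xi A i}

/-- Multilinear extension of `f` to the mixed-strategy space. -/
def mlext (f : PureProf A → ℝ) (x : Strat A) : ℝ :=
  ∑ y : PureProf A, f y * ∏ i, coord x i (y i)

/-- The `X`-coordinates of the point mass at action `o`. -/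
def pureVec (i : ι) (o : Option (A i)) : A i → ℝ :=
  fun a => if some a = o then 1 else 0

/-- `x` is a pure strategy profile. -/
def IsPureStrat (x : Strat A) : Prop :=
  ∃ y : PureProf A, ∀ i, x i = pureVec i (y i)

/-- Best responses of player `i` (with payoff extension `mlext f`) to `x₋ᵢ`. -/
def BRi (f : PureProf A → ℝ) (x : Strat A) (i : ι) : Set (A i → ℝ) :=
  {zi | zi ∈ Xi A i ∧ ∀ zi' ∈ Xi A i,
    mlext f (Function.update x i zi') ≤ mlext f (Function.update x i zi)}

/-- Joint best-response set for the game with utilities `util`. -/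
def BRset (util : ι → PureProf A → ℝ) (x : Strat A) : Set (Strat A) :=
  {z | ∀ i, z i ∈ BRi (util i) x i}

/-- Nash equilibrium: `x ∈ BR(x)`. -/
def IsNE (util : ι → PureProf A → ℝ) (x : Strat A) : Prop :=
  x ∈ BRset util x

/-- `u` is a weighted potential for the game `util`, with positive weights `w`. -/
def IsWeightedPotential (util : ι → PureProf A → ℝ) (w : ι → ℝ)
    (u : PureProf A → ℝ) : Prop :=
  (∀ i, 0 < w i) ∧ ∀ (i : ι) (y : PureProf A) (o : Option (A i)),
    util i (Function.update y i o) - util i y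
      = w i * (u (Function.update y i o) - u y)

/-- First-order non-degeneracy of an equilibrium: every pure best response of every
player lies in the carrier (support) of the equilibrium. -/
def FirstOrderNonDegen (util : ι → PureProf A → ℝ) (xs : Strat A) : Prop :=
  ∀ (i : ι) (o : Option (A i)), pureVec i o ∈ BRi (util i) xs i → coord xs i o ≠ 0

/-- Directions tangent (at `xs`) to the face of `X` determined by the carrier of `xs`:
the coordinates outside the carrier are frozen, and if the distinguished action `none`
is outside the carrier the coordinates of each player must sum to zero. -/
def tangentSpace (xs : Strat A) : Set (Strat A) :=
  {v | ∀ i, (∀ a, coord xs i (some a) = 0 → v i a = 0) ∧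
        (coord xs i none = 0 → ∑ a, v i a = 0)}

/-- Second-order non-degeneracy: the Hessian `H̃` of the potential restricted to the
face of `X` containing `xs` is non-singular. -/
def SecondOrderNonDegen (u : PureProf A → ℝ) (xs : Strat A) : Prop :=
  ∀ v ∈ tangentSpace xs, v ≠ 0 →
    ∃ w ∈ tangentSpace xs, fderiv ℝ (fderiv ℝ (mlext u)) xs v w ≠ 0

/-- A regular (finite, weighted) potential game: a weighted potential game all of whose
Nash equilibria are first- and second-order non-degenerate. -/
def IsRegularPotentialGame (util : ι → PureProf A → ℝ) (u : PureProf A → ℝ) : Prop :=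
  (∃ w : ι → ℝ, IsWeightedPotential util w u) ∧
  ∀ xs : Strat A, IsNE util xs →
    FirstOrderNonDegen util xs ∧ SecondOrderNonDegen u xs

/-- A solution of the best-response dynamics `ẋ ∈ BR(x) − x` on `[0,∞)`: an absolutely
continuous curve in `X` whose a.e. derivative `v` satisfies `x + v ∈ BR(x)`. -/
def IsBRProcess (util : ι → PureProf A → ℝ) (x : ℝ → Strat A) : Prop :=
  (∀ t, 0 ≤ t → x t ∈ mixedX) ∧
  ∃ v : ℝ → Strat A, LocallyIntegrableOn v (Ici 0) volume ∧
    (∀ t, 0 ≤ t → x t = x 0 + ∫ s in Ioc (0:ℝ) t, v s) ∧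
    (∀ᵐ s ∂(volume.restrict (Ici (0:ℝ))), x s + v s ∈ BRset util (x s))

/-! ### Auxiliary lemmas for Lemma A.1 -/

lemma coord_congr {x x' : Strat A} {i : ι} (h : x i = x' i) (o : Option (A i)) :
    coord x i o = coord x' i o := by
  cases o <;> simp [coord, h]

lemma coord_quad (x v w : Strat A) (i : ι) (o : Option (A i)) :
    coord (x + v + w) i o + coord x i o = coord (x + v) i o + coord (x + w) i o := by
  cases o <;> simp [coord, Finset.sum_add_distrib] <;> ring

lemma coord_line (x v : Strat A) (t : ℝ) (i : ι) (o : Option (A i)) :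
    coord (x + t • v) i o = coord x i o + t * (coord (x + v) i o - coord x i o) := by
  cases o <;> simp [coord, Finset.sum_add_distrib, Finset.mul_sum] <;> ring

lemma prod_coord_eq (x x' : Strat A) (i₀ : ι) (h : ∀ j, j ≠ i₀ → x' j = x j)
    (y : PureProf A) :
    ∏ j, coord x' j (y j)
      = coord x' i₀ (y i₀) * ∏ j ∈ Finset.univ.erase i₀, coord x j (y j) := by
  rw [← Finset.mul_prod_erase Finset.univ _ (Finset.mem_univ i₀)]
  congr 1
  refine Finset.prod_congr rfl fun j hj => ?_
  exact coord_congr (h j (Finset.ne_of_mem_erase hj)) _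

lemma mlext_line (f : PureProf A → ℝ) (x v : Strat A) (i₀ : ι)
    (hv : ∀ j, j ≠ i₀ → v j = 0) (t : ℝ) :
    mlext f (x + t • v) = mlext f x + t * (mlext f (x + v) - mlext f x) := by
  have h1 : ∀ j, j ≠ i₀ → (x + t • v) j = x j := by
    intro j hj; simp [hv j hj]
  have h2 : ∀ j, j ≠ i₀ → (x + v) j = x j := by
    intro j hj; simp [hv j hj]
  have key : ∀ y : PureProf A,
      f y * ∏ j, coord (x + t • v) j (y j)
        = f y * ∏ j, coord x j (y j)
          + t * (f y * ∏ j, coord (x + v) j (y j) - f y * ∏ j, coord x j (y j)) := by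
    intro y
    rw [prod_coord_eq x (x + t • v) i₀ h1 y, prod_coord_eq x (x + v) i₀ h2 y,
      prod_coord_eq x x i₀ (fun _ _ => rfl) y, coord_line x v t i₀ (y i₀)]
    ring
  unfold mlext
  rw [Finset.sum_congr rfl fun y _ => key y, Finset.sum_add_distrib, ← Finset.mul_sum,
    Finset.sum_sub_distrib]

lemma mlext_quad (f : PureProf A → ℝ) (x v w : Strat A) (i₀ : ι)
    (hv : ∀ j, j ≠ i₀ → v j = 0) (hw : ∀ j, j ≠ i₀ → w j = 0) :
    mlext f (x + v + w) + mlext f x = mlext f (x + v) + mlext f (x + w) := by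
  have h1 : ∀ j, j ≠ i₀ → (x + v + w) j = x j := by
    intro j hj; simp [hv j hj, hw j hj]
  have h2 : ∀ j, j ≠ i₀ → (x + v) j = x j := by
    intro j hj; simp [hv j hj]
  have h3 : ∀ j, j ≠ i₀ → (x + w) j = x j := by
    intro j hj; simp [hw j hj]
  have key : ∀ y : PureProf A,
      f y * ∏ j, coord (x + v + w) j (y j) + f y * ∏ j, coord x j (y j)
        = f y * ∏ j, coord (x + v) j (y j) + f y * ∏ j, coord (x + w) j (y j) := by
    intro y
    have hq : coord (x + v + w) i₀ (y i₀)
        = coord (x + v) i₀ (y i₀) + coord (x + w) i₀ (y i₀) - coord x i₀ (y i₀) := by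
      have := coord_quad x v w i₀ (y i₀); linarith
    rw [prod_coord_eq x (x + v + w) i₀ h1 y, prod_coord_eq x (x + v) i₀ h2 y,
      prod_coord_eq x (x + w) i₀ h3 y, prod_coord_eq x x i₀ (fun _ _ => rfl) y, hq]
    ring
  unfold mlext
  rw [← Finset.sum_add_distrib, ← Finset.sum_add_distrib]
  exact Finset.sum_congr rfl fun y _ => key y

lemma contDiff_coord (i : ι) (o : Option (A i)) :
    ContDiff ℝ 2 (fun x : Strat A => coord x i o) := by
  have hp : ∀ a : A i, ContDiff ℝ 2 (fun x : Strat A => x i a) := by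
    intro a
    have h1 : ContDiff ℝ 2 (fun x : Strat A => x i) := contDiff_pi.mp contDiff_id i
    exact (contDiff_pi.mp contDiff_id a).comp h1
  cases o with
  | none =>
    have : ContDiff ℝ 2 (fun x : Strat A => ∑ a, x i a) :=
      ContDiff.sum fun a _ => hp a
    exact contDiff_const.sub this
  | some a => exact hp a

lemma contDiff_mlext (f : PureProf A → ℝ) : ContDiff ℝ 2 (mlext (A := A) f) := by
  unfold mlext
  exact ContDiff.sum fun y _ =>
    contDiff_const.mul (contDiff_prod fun j _ => contDiff_coord j (y j))

lemma differentiable_mlext (f : PureProf A → ℝ) : Differentiable ℝ (mlext (A := A) f) :=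
  (contDiff_mlext f).differentiable (by norm_num)

lemma fderiv_dir (f : PureProf A → ℝ) (z v : Strat A) (i₀ : ι)
    (hv : ∀ j, j ≠ i₀ → v j = 0) :
    fderiv ℝ (mlext f) z v = mlext f (z + v) - mlext f z := by
  have hd : HasFDerivAt (mlext f) (fderiv ℝ (mlext f) z) z :=
    (differentiable_mlext f z).hasFDerivAt
  have hline : HasDerivAt (fun t : ℝ => z + t • v) v 0 := by
    simpa using ((hasDerivAt_id (0 : ℝ)).smul_const v).const_add z
  have h1 : HasDerivAt (fun t : ℝ => mlext f (z + t • v)) (fderiv ℝ (mlext f) z v) 0 := by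
    have h1' : HasDerivAt (fun t : ℝ => mlext f (z + t • v))
        (fderiv ℝ (mlext f) (z + (0:ℝ) • v) v) 0 :=
      ((differentiable_mlext f (z + (0:ℝ) • v)).hasFDerivAt).comp_hasDerivAt (f := fun t : ℝ => z + t • v) 0 hline
    simpa using h1'
  have h2 : HasDerivAt (fun t : ℝ => mlext f (z + t • v))
      (mlext f (z + v) - mlext f z) 0 := by
    have he : (fun t : ℝ => mlext f (z + t • v))
        = fun t => mlext f z + t * (mlext f (z + v) - mlext f z) :=
      funext fun t => mlext_line f z v i₀ hv t
    rw [he]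
    simpa using ((hasDerivAt_id (0 : ℝ)).mul_const (mlext f (z + v) - mlext f z)).const_add
      (mlext f z)
  exact h1.unique h2

lemma hessian_zero (f : PureProf A → ℝ) (xs v w : Strat A) (i₀ : ι)
    (hv : ∀ j, j ≠ i₀ → v j = 0) (hw : ∀ j, j ≠ i₀ → w j = 0) :
    fderiv ℝ (fderiv ℝ (mlext f)) xs v w = 0 := by
  have hG : Differentiable ℝ (fderiv ℝ (mlext (A := A) f)) :=
    ((contDiff_mlext f).fderiv_right (m := 1) (by norm_num)).differentiable (by norm_num)
  have hA : fderiv ℝ (fderiv ℝ (mlext f)) xs v w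
      = fderiv ℝ (fun x => fderiv ℝ (mlext f) x w) xs v := by
    have := fderiv_clm_apply (x := xs) (c := fderiv ℝ (mlext f)) (u := fun _ => w)
      (hG xs) (differentiableAt_const w)
    rw [this]
    simp
  rw [hA]
  have hB : (fun x : Strat A => fderiv ℝ (mlext f) x w)
      = fun x => mlext f (x + w) - mlext f x :=
    funext fun x => fderiv_dir f x w i₀ hw
  rw [hB]
  have hFd : Differentiable ℝ (mlext (A := A) f) := differentiable_mlext f
  have h1 : HasFDerivAt (fun x : Strat A => mlext f (x + w))
      (fderiv ℝ (mlext f) (xs + w)) xs := by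
    have := (hFd (xs + w)).hasFDerivAt.comp xs ((hasFDerivAt_id xs).add_const w)
    exact this
  have h2 : HasFDerivAt (fun x : Strat A => mlext f (x + w) - mlext f x)
      (fderiv ℝ (mlext f) (xs + w) - fderiv ℝ (mlext f) xs) xs :=
    h1.sub (hFd xs).hasFDerivAt
  rw [h2.fderiv]
  have e1 := fderiv_dir f (xs + w) v i₀ hv
  have e2 := fderiv_dir f xs v i₀ hv
  have hq := mlext_quad f xs v w i₀ hv hw
  have hcomm : xs + w + v = xs + v + w := by abel
  simp only [ContinuousLinearMap.sub_apply, e1, e2, hcomm]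
  linarith

lemma supp_singleton (xs : Strat A) (j : ι)
    (hj : Set.ncard {o : Option (A j) | coord xs j o ≠ 0} ≤ 1) :
    ∃ o₀ : Option (A j), coord xs j o₀ ≠ 0 ∧ ∀ o, coord xs j o ≠ 0 → o = o₀ := by
  have hne : ∃ o : Option (A j), coord xs j o ≠ 0 := by
    by_contra h
    push_neg at h
    have h0 := h none
    have hs : ∑ a, xs j a = 0 := Finset.sum_eq_zero fun a _ => h (some a)
    simp [coord, hs] at h0
  obtain ⟨o₀, ho₀⟩ := hne
  refine ⟨o₀, ho₀, fun o ho => ?_⟩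
  exact (Set.ncard_le_one (Set.toFinite _)).mp hj o ho o₀ ho₀

lemma tangent_supported (xs v : Strat A) (hv : v ∈ tangentSpace xs)
    (j : ι) (hj : Set.ncard {o : Option (A j) | coord xs j o ≠ 0} ≤ 1) : v j = 0 := by
  obtain ⟨h1, h2⟩ := hv j
  obtain ⟨o₀, ho₀, hsub⟩ := supp_singleton xs j hj
  funext a
  cases o₀ with
  | none =>
    refine h1 a ?_
    by_contra hc
    exact Option.some_ne_none a (hsub _ hc)
  | some a₀ =>
    have hnone : coord xs j none = 0 := by
      by_contra hc
      exact absurd (hsub none hc) (by simp)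
    have hz : ∀ a', a' ≠ a₀ → v j a' = 0 := by
      intro a' ha'
      refine h1 a' ?_
      by_contra hc
      exact ha' (Option.some_injective _ (hsub _ hc))
    have hsum0 : ∑ a', v j a' = 0 := h2 hnone
    by_cases ha : a = a₀
    · subst ha
      have : ∑ a', v j a' = v j a :=
        Finset.sum_eq_single_of_mem a (Finset.mem_univ a) fun b _ hb => hz b hb
      rw [this] at hsum0
      exact hsum0
    · exact hz a ha

/-- **Lemma A.1.** In a weighted potential game, a Nash equilibrium at which exactly one
player properly mixes is second-order degenerate (the restricted Hessian `H̃` vanishes,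
hence is singular); consequently in a regular potential game every mixed equilibrium
has at least two players using properly mixed strategies. -/
theorem one_mixing_player_is_degenerate
    [Nonempty ι] (util : ι → PureProf A → ℝ) (w : ι → ℝ) (u : PureProf A → ℝ)
    (hpot : IsWeightedPotential util w u) :
    (∀ xs : Strat A, IsNE util xs →
      (∃! i : ι, 2 ≤ Set.ncard {o : Option (A i) | coord xs i o ≠ 0}) →
      (∀ v ∈ tangentSpace xs, ∀ w' ∈ tangentSpace xs,
          fderiv ℝ (fderiv ℝ (mlext u)) xs v w' = 0) ∧
        ¬ SecondOrderNonDegen u xs) ∧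
    (IsRegularPotentialGame util u →
      ∀ xs : Strat A, IsNE util xs → ¬ IsPureStrat xs →
        2 ≤ Set.ncard {i : ι | 2 ≤ Set.ncard {o : Option (A i) | coord xs i o ≠ 0}}) := by
  have part1 : ∀ xs : Strat A, IsNE util xs →
      (∃! i : ι, 2 ≤ Set.ncard {o : Option (A i) | coord xs i o ≠ 0}) →
      (∀ v ∈ tangentSpace xs, ∀ w' ∈ tangentSpace xs,
          fderiv ℝ (fderiv ℝ (mlext u)) xs v w' = 0) ∧
        ¬ SecondOrderNonDegen u xs := by
    intro xs _ hex
    obtain ⟨i₀, hi₀, huniq⟩ := hex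
    have hsupp : ∀ (v : Strat A), v ∈ tangentSpace xs → ∀ j, j ≠ i₀ → v j = 0 := by
      intro v hv j hj
      refine tangent_supported xs v hv j ?_
      by_contra hc
      push_neg at hc
      exact hj (huniq j hc)
    have hzero : ∀ v ∈ tangentSpace xs, ∀ w' ∈ tangentSpace xs,
        fderiv ℝ (fderiv ℝ (mlext u)) xs v w' = 0 := by
      intro v hv w' hw'
      exact hessian_zero u xs v w' i₀ (hsupp v hv) (hsupp w' hw')
    refine ⟨hzero, ?_⟩
    -- build a nonzero tangent vector supported on player `i₀`
    have htwo : ∃ o₁ ∈ {o : Option (A i₀) | coord xs i₀ o ≠ 0},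
        ∃ o₂ ∈ {o : Option (A i₀) | coord xs i₀ o ≠ 0}, o₁ ≠ o₂ :=
      (Set.one_lt_ncard (Set.toFinite _)).mp (by omega)
    obtain ⟨o₁, ho₁, o₂, ho₂, hne⟩ := htwo
    simp only [Set.mem_setOf_eq] at ho₁ ho₂
    -- find a vector `g` on player `i₀`'s coordinates which is tangent and nonzero
    have hg : ∃ g : A i₀ → ℝ, g ≠ 0 ∧
        (∀ a, coord xs i₀ (some a) = 0 → g a = 0) ∧
        (coord xs i₀ none = 0 → ∑ a, g a = 0) := by
      match o₁, ho₁, o₂, ho₂, hne with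
      | some a₁, ho₁, some a₂, ho₂, hne =>
        have ha : a₁ ≠ a₂ := fun h => hne (by rw [h])
        refine ⟨fun a => (if a = a₁ then 1 else 0) - (if a = a₂ then 1 else 0), ?_, ?_, ?_⟩
        · intro h
          have := congrFun h a₁
          simp [ha] at this
        · intro a hca
          by_cases h1 : a = a₁
          · exact absurd (h1 ▸ hca) ho₁
          · by_cases h2 : a = a₂
            · exact absurd (h2 ▸ hca) ho₂
            · simp [h1, h2]
        · intro _
          simp [Finset.sum_sub_distrib]
      | some a₁, ho₁, none, ho₂, hne =>
        refine ⟨fun a => if a = a₁ then 1 else 0, ?_, ?_, ?_⟩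
        · intro h
          have := congrFun h a₁
          simp at this
        · intro a hca
          by_cases h1 : a = a₁
          · exact absurd (h1 ▸ hca) ho₁
          · simp [h1]
        · intro hc
          exact absurd hc ho₂
      | none, ho₁, some a₂, ho₂, hne =>
        refine ⟨fun a => if a = a₂ then 1 else 0, ?_, ?_, ?_⟩
        · intro h
          have := congrFun h a₂
          simp at this
        · intro a hca
          by_cases h2 : a = a₂
          · exact absurd (h2 ▸ hca) ho₂
          · simp [h2]
        · intro hc
          exact absurd hc ho₁
      | none, ho₁, none, ho₂, hne => exact absurd rfl hne
    obtain ⟨g, hgne, hg1, hg2⟩ := hg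
    set v₀ : Strat A := Function.update (0 : Strat A) i₀ g with hv₀def
    have hv₀i₀ : v₀ i₀ = g := by simp [hv₀def]
    have hv₀j : ∀ j, j ≠ i₀ → v₀ j = 0 := fun j hj => by
      simp [hv₀def, Function.update_of_ne hj]
    have hv₀T : v₀ ∈ tangentSpace xs := by
      intro j
      by_cases hj : j = i₀
      · subst hj
        rw [hv₀i₀]
        exact ⟨hg1, hg2⟩
      · rw [hv₀j j hj]
        exact ⟨fun a _ => rfl, fun _ => Finset.sum_const_zero⟩
    have hv₀ne : v₀ ≠ 0 := by
      intro h
      apply hgne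
      rw [← hv₀i₀, h]
      rfl
    intro hS
    obtain ⟨w0, hw0T, hw0⟩ := hS v₀ hv₀T hv₀ne
    exact hw0 (hzero v₀ hv₀T w0 hw0T)
  refine ⟨part1, ?_⟩
  intro hreg xs hNE hnp
  by_contra hlt
  push_neg at hlt
  have hle : Set.ncard {i : ι | 2 ≤ Set.ncard {o : Option (A i) | coord xs i o ≠ 0}} ≤ 1 := by
    omega
  -- some player must mix, else `xs` is pure
  have hex : ∃ i₀ : ι, 2 ≤ Set.ncard {o : Option (A i₀) | coord xs i₀ o ≠ 0} := by
    by_contra h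
    push_neg at h
    apply hnp
    have hsing : ∀ i : ι, ∃ o₀ : Option (A i), coord xs i o₀ ≠ 0 ∧
        ∀ o, coord xs i o ≠ 0 → o = o₀ := by
      intro i
      exact supp_singleton xs i (by have := h i; omega)
    choose y hy1 hy2 using hsing
    refine ⟨y, fun i => funext fun a => ?_⟩
    rcases ho : y i with _ | a₀
    · have hz : xs i a = 0 := by
        by_contra hc
        have : (some a : Option (A i)) = y i := hy2 i (some a) hc
        rw [ho] at this
        exact absurd this (by simp)
      simp [pureVec, ho, hz]
    · have hnone : coord xs i none = 0 := by
        by_contra hc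
        have := hy2 i none hc
        rw [ho] at this
        exact absurd this (by simp)
      have hsum1 : ∑ b, xs i b = 1 := by
        simp only [coord] at hnone
        linarith
      have hz : ∀ b, b ≠ a₀ → xs i b = 0 := by
        intro b hb
        by_contra hc
        have : (some b : Option (A i)) = y i := hy2 i (some b) hc
        rw [ho] at this
        exact hb (Option.some_injective _ this)
      by_cases ha : a = a₀
      · subst ha
        have : ∑ b, xs i b = xs i a :=
          Finset.sum_eq_single_of_mem a (Finset.mem_univ a) fun b _ hb => hz b hb
        rw [this] at hsum1
        simp [pureVec, ho, hsum1]
      · simp [pureVec, ho, ha, hz a ha]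
  obtain ⟨i₀, hi₀⟩ := hex
  have huniq : ∃! i : ι, 2 ≤ Set.ncard {o : Option (A i) | coord xs i o ≠ 0} := by
    refine ⟨i₀, hi₀, fun j hj => ?_⟩
    exact (Set.ncard_le_one (Set.toFinite _)).mp hle j hj i₀ hi₀
  exact (part1 xs hNE huniq).2 (hreg.2 xs hNE).2

end BRGame
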